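/- arXiv:2605.02734 — 5 statements merged into one kernel-verified Lean document; each statement's English description precedes it below -/
import Mathlib

section
/- On a tree taxonomy under the Selective-Exclusion contract, an action vector a ∈ {0,1,⊥}^V is deferral coherent (taxonomically satisfiable, contract-admissible, and deductively closed) if and only if no edge (p→c) exhibits any of the three patterns: (a_p=0 ∧ a_c=1), (a_p=⊥ ∧ a_c=1), or (a_p=0 ∧ a_c=⊥). -/
/-- Actions: `some false` = assert 0, `some true` = assert 1, `none` = defer (⊥). -/
abbrev Act := Option Bool

def Consistent {V : Type*} (E : V → V → Prop) (y : V → Bool) : Prop :=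
  ∀ p c, E p c → y c = true → y p = true

def Compat {V : Type*} (E : V → V → Prop) (a : V → Act) : Set (V → Bool) :=
  {y | Consistent E y ∧ ∀ v b, a v = some b → y v = b}

def Entails {V : Type*} (E : V → V → Prop) (a : V → Act) (v : V) (b : Bool) : Prop :=
  ∀ y ∈ Compat E a, y v = b

def DeductivelyClosed {V : Type*} (E : V → V → Prop) (a : V → Act) : Prop :=
  ∀ v b, Entails E a v b → a v = some b

/-- Selective-Exclusion contract: a deferred parent forbids positive child
assertions. -/
def SEAdmissible {V : Type*} (E : V → V → Prop) (a : V → Act) : Prop :=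
  ∀ p c, E p c → a p = none → a c = some false ∨ a c = none

/-- Deferral coherence = taxonomic satisfiability + SE admissibility +
deductive closure. -/
def DeferralCoherent {V : Type*} (E : V → V → Prop) (a : V → Act) : Prop :=
  (Compat E a).Nonempty ∧ SEAdmissible E a ∧ DeductivelyClosed E a

/-- Local characterisation of deferral coherence on a tree
taxonomy: `a` is deferral coherent under SE iff no edge `(p → c)` exhibits
`(a_p, a_c) ∈ {(0,1), (⊥,1), (0,⊥)}`. -/
theorem local_characterisation_of_coherence {V : Type*} (pa : V → Option V)
    (hwf : WellFounded fun p c => pa c = some p) (a : V → Act) :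
    DeferralCoherent (fun x y => pa y = some x) a ↔
      ∀ p c, pa c = some p →
        ¬(a p = some false ∧ a c = some true) ∧
        ¬(a p = none ∧ a c = some true) ∧
        ¬(a p = some false ∧ a c = none) := by
  classical
  constructor
  · rintro ⟨⟨y, hy⟩, hSE, hDC⟩ p c hpc
    refine ⟨?_, ?_, ?_⟩
    · rintro ⟨hp, hc⟩
      have h1 := hy.2 c true hc
      have h2 := hy.2 p false hp
      have h3 := hy.1 p c hpc h1
      simp [h2] at h3
    · rintro ⟨hp, hc⟩
      rcases hSE p c hpc hp with h | h <;> simp [hc] at h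
    · rintro ⟨hp, hc⟩
      have hent : Entails (fun x y => pa y = some x) a c false := by
        intro z hz
        have hzp := hz.2 p false hp
        by_contra hne
        have hzc : z c = true := by cases hzc : z c <;> simp_all
        have := hz.1 p c hpc hzc
        simp [hzp] at this
      have := hDC c false hent
      simp [hc] at this
  · intro h
    have hup : ∀ p c, pa c = some p → a c = some true → a p = some true := by
      intro p c hpc hc
      have hh := h p c hpc
      cases hap : a p with
      | none => exact absurd ⟨hap, hc⟩ hh.2.1
      | some b =>
        cases b with
        | false => exact absurd ⟨hap, hc⟩ hh.1
        | true => rfl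
    have hdown : ∀ p c, pa c = some p → a p = some false → a c = some false := by
      intro p c hpc hp
      have hh := h p c hpc
      cases hac : a c with
      | none => exact absurd ⟨hp, hac⟩ hh.2.2
      | some b =>
        cases b with
        | false => rfl
        | true => exact absurd ⟨hp, hac⟩ hh.1
    -- base compatible assignment
    set y0 : V → Bool := fun w => if a w = some true then true else false with hy0
    have hy0compat : y0 ∈ Compat (fun x y => pa y = some x) a := by
      constructor
      · intro p c hpc hc
        simp only [hy0] at hc ⊢
        split at hc
        · next hct => simp [hup p c hpc hct]
        · simp at hc
      · intro v b hv
        cases b <;> simp [hy0, hv]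
    refine ⟨⟨y0, hy0compat⟩, ?_, ?_⟩
    · intro p c hpc hp
      have hh := h p c hpc
      cases hac : a c with
      | none => exact Or.inr rfl
      | some b =>
        cases b with
        | false => exact Or.inl rfl
        | true => exact absurd ⟨hp, hac⟩ hh.2.1
    · intro v b hent
      by_contra hne
      cases hav : a v with
      | some b' =>
        have hb : b' ≠ b := by rintro rfl; exact hne hav
        have := hent y0 hy0compat
        cases b' <;> cases b <;> simp_all [hy0]
      | none =>
        -- two compatible assignments disagree at v
        set R : V → V → Prop := fun c p => pa c = some p with hR
        set y1 : V → Bool :=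
          fun w => if a w = some true ∨ Relation.ReflTransGen R v w then true else false with hy1
        have hdesc : ∀ u w, Relation.ReflTransGen R u w → a w = some false →
            a u = some false := by
          intro u w hr hw
          induction hr using Relation.ReflTransGen.head_induction_on with
          | refl => exact hw
          | head hstep _ ih => exact hdown _ _ hstep ih
        have hy1compat : y1 ∈ Compat (fun x y => pa y = some x) a := by
          constructor
          · intro p c hpc hc
            simp only [hy1] at hc ⊢
            split at hc
            · next hct =>
              rcases hct with hct | hct
              · simp [hup p c hpc hct]
              · have : Relation.ReflTransGen R v p := hct.tail hpc
                simp [this]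
            · simp at hc
          · intro w b' hw
            cases b' with
            | true => simp [hy1, hw]
            | false =>
              have hnr : ¬ Relation.ReflTransGen R v w := by
                intro hr
                have := hdesc v w hr hw
                simp [hav] at this
              simp [hy1, hw, hnr]
        have h0 := hent y0 hy0compat
        have h1 := hent y1 hy1compat
        have hv0 : y0 v = false := by simp [hy0, hav]
        have hv1 : y1 v = true := by simp [hy1, Relation.ReflTransGen.refl]
        rw [hv0] at h0; rw [hv1] at h1
        exact Bool.false_ne_true (h0.trans h1.symm)
end

section
/- Under the nodewise Bayes rule that at each node chooses the action with maximal score among (1−π_v, π_v, q_v) — with action 0 for 1−π_v, action 1 for π_v, and defer ⊥ for q_v, assuming no ties — the configuration (a_p, a_c) = (0, 1) is impossible whenever π_c ≤ π_p, but there exist valid joint distributions satisfying the upward implication Y_c=1 ⇒ Y_p=1 for which the rule produces (a_p, a_c) = (⊥, 1), and other valid joint distributions for which it produces (a_p, a_c) = (0, ⊥). -/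
/-- The nodewise Bayes rule picks action 0 at a node with `P(Y=1) = π` and
expert correctness `q` iff `1 - π` strictly exceeds the other two scores. -/
def chooses0 (π q : ℝ) : Prop := 1 - π > π ∧ 1 - π > q

/-- Picks action 1 iff `π` is the strict maximum of the three scores. -/
def chooses1 (π q : ℝ) : Prop := π > 1 - π ∧ π > q

/-- Picks defer (⊥) iff `q` is the strict maximum of the three scores. -/
def choosesDefer (π q : ℝ) : Prop := q > π ∧ q > 1 - π

/-- Marginal `P(Y_p = 1)` of a joint distribution `d` on `(Y_p, Y_c)`. -/
def piP (d : Bool × Bool → ℝ) : ℝ := d (true, true) + d (true, false)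

/-- Marginal `P(Y_c = 1)`. -/
def piC (d : Bool × Bool → ℝ) : ℝ := d (true, true) + d (false, true)

/-- `d` is a probability distribution on `{0,1}²` respecting the upward
implication `Y_c = 1 ⇒ Y_p = 1` (i.e. `P(Y_p = 0, Y_c = 1) = 0`). -/
def ValidJoint (d : Bool × Bool → ℝ) : Prop :=
  (∀ s, 0 ≤ d s) ∧
  d (true, true) + d (true, false) + d (false, true) + d (false, false) = 1 ∧
  d (false, true) = 0

/-- Under the no-ties nodewise Bayes rule, the pattern
`(a_p, a_c) = (0, 1)` is impossible whenever `π_c ≤ π_p`; but there are valid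
joint distributions (with expert correctness values in `[0,1]`) producing the
delegation violation `(⊥, 1)`, and others producing the deductive defect
`(0, ⊥)`. -/
theorem nodewise_bayes_can_be_incoherent :
    (∀ πp πc qp qc : ℝ, πp ∈ Set.Icc (0:ℝ) 1 → πc ∈ Set.Icc (0:ℝ) 1 →
      qp ∈ Set.Icc (0:ℝ) 1 → qc ∈ Set.Icc (0:ℝ) 1 → πc ≤ πp →
      ¬(chooses0 πp qp ∧ chooses1 πc qc)) ∧
    (∃ d : Bool × Bool → ℝ, ∃ qp qc : ℝ, ValidJoint d ∧
      qp ∈ Set.Icc (0:ℝ) 1 ∧ qc ∈ Set.Icc (0:ℝ) 1 ∧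
      choosesDefer (piP d) qp ∧ chooses1 (piC d) qc) ∧
    (∃ d : Bool × Bool → ℝ, ∃ qp qc : ℝ, ValidJoint d ∧
      qp ∈ Set.Icc (0:ℝ) 1 ∧ qc ∈ Set.Icc (0:ℝ) 1 ∧
      chooses0 (piP d) qp ∧ choosesDefer (piC d) qc) := by
  refine ⟨?_, ?_, ?_⟩
  · rintro πp πc qp qc _ _ _ _ hle ⟨⟨h1, _⟩, ⟨h2, _⟩⟩
    linarith
  · refine ⟨fun s => if s = (true, true) then 0.6 else if s = (true, false) then 0.1
      else if s = (false, false) then 0.3 else 0, 0.8, 0.4, ⟨?_, by norm_num, by norm_num⟩,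
      ⟨by norm_num, by norm_num⟩, ⟨by norm_num, by norm_num⟩, ?_, ?_⟩
    · rintro ⟨a, b⟩ <;> cases a <;> cases b <;> norm_num
    · constructor <;> simp [piP] <;> norm_num
    · constructor <;> simp [piC] <;> norm_num
  · refine ⟨fun s => if s = (true, true) then 0.1 else if s = (true, false) then 0.1
      else if s = (false, false) then 0.8 else 0, 0.1, 0.95, ⟨?_, by norm_num, by norm_num⟩,
      ⟨by norm_num, by norm_num⟩, ⟨by norm_num, by norm_num⟩, ?_, ?_⟩
    · rintro ⟨a, b⟩ <;> cases a <;> cases b <;> norm_num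
    · constructor <;> simp [piP] <;> norm_num
    · constructor <;> simp [piC] <;> norm_num
end

section
/- There exists a probability distribution over (Y_p, Y_c) ∈ {0,1}² with Y_c=1 ⇒ Y_p=1, expert error rates, and a deferral cost λ > 0 such that: deferring the parent has strictly lower local parent risk than asserting the parent present, yet the globally optimal action pair in the Selective-Exclusion-feasible set achieves strictly lower total risk by asserting the parent present (unlocking a child-present assertion that deferral forbids). Concretely, with P(Y_p=1,Y_c=1)=0.9, P(Y_p=0,Y_c=0)=0.1, perfect parent expert, child expert error 0.4, λ=0.05, and model assertion risks 0.1 at each node: deferring the parent costs 0.05 < 0.1 locally, but the best SE-feasible policy with a_p=⊥ has total risk 0.50 while (a_p,a_c)=(1,1) has total risk 0.20. -/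
/-- Option value of commitment under Selective-Exclusion.
There is a joint distribution on `(Y_p, Y_c)` respecting `Y_c = 1 ⇒ Y_p = 1`,
expert error rates, and a deferral cost `λ > 0` (concretely
`P(1,1) = 0.9`, `P(0,0) = 0.1`, perfect parent expert, child expert error `0.4`,
`λ = 0.05`) such that deferring the parent is locally cheaper than asserting it
present (`0.05 < 0.1`), yet every SE-feasible child action under a deferred
parent gives total risk at least `0.50`, while `(a_p, a_c) = (1, 1)` achieves
total risk `0.20`. -/
theorem option_value_of_commitment :
    ∃ (d : Bool × Bool → ℝ) (ep ec lam : ℝ),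
      (∀ s, 0 ≤ d s) ∧
      d (true, true) + d (true, false) + d (false, true) + d (false, false) = 1 ∧
      d (false, true) = 0 ∧ 0 < lam ∧
      d (true, true) = 0.9 ∧ d (false, false) = 0.1 ∧ d (true, false) = 0 ∧
      ep = 0 ∧ ec = 0.4 ∧ lam = 0.05 ∧
      (let ρp : Act → ℝ := fun a =>
        match a with
        | some true => d (false, true) + d (false, false)   -- P(Y_p = 0)
        | some false => d (true, true) + d (true, false)    -- P(Y_p = 1)
        | none => ep + lam                                  -- expert error + cost
       let ρc : Act → ℝ := fun a =>
        match a with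
        | some true => d (true, false) + d (false, false)   -- P(Y_c = 0)
        | some false => d (true, true) + d (false, true)    -- P(Y_c = 1)
        | none => ec + lam
       ρp none < ρp (some true) ∧
       ρp (some true) + ρc (some true) = 0.20 ∧
       (∀ ac : Act, ac = some false ∨ ac = none →
          0.50 ≤ ρp none + ρc ac) ∧
       (∀ ac : Act, ac = some false ∨ ac = none →
          ρp (some true) + ρc (some true) < ρp none + ρc ac)) := by
  refine ⟨fun s => if s = (true,true) then 0.9 else if s = (false,false) then 0.1 else 0, 0, 0.4, 0.05, ?_, by norm_num, by norm_num, by norm_num, by norm_num, by norm_num, by norm_num, rfl, rfl, rfl, ?_⟩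
  · intro s; fin_cases s <;> norm_num
  · refine ⟨by norm_num, by norm_num, ?_, ?_⟩ <;>
      (intro ac h; rcases h with h|h <;> subst h <;> norm_num)
end

section
/- If a is a Selective-Exclusion-coherent action vector on a tree taxonomy (for every edge: a_p=0 ⇒ a_c=0, and a_p=⊥ ⇒ a_c ∈ {0,⊥}) and m is a taxonomy-consistent expert label vector, then the completed system label ŷ defined by ŷ_v = a_v if a_v ∈ {0,1} and ŷ_v = m_v if a_v = ⊥ is itself taxonomy-consistent (ŷ_c = 1 ⇒ ŷ_p = 1 for every edge). -/
/-- If `a` is Selective-Exclusion coherent (on every edge: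
`a_p = 0 ⇒ a_c = 0` and `a_p = ⊥ ⇒ a_c ∈ {0,⊥}`) and the expert labels `m`
are taxonomy-consistent, then the completed system label (model assertions on
non-deferred nodes, expert labels on deferred nodes) is taxonomy-consistent. -/
theorem coherent_handoff_preserves_consistency {V : Type*} (E : V → V → Prop)
    (a : V → Act) (m : V → Bool)
    (hcoh : ∀ p c, E p c →
      (a p = some false → a c = some false) ∧
      (a p = none → a c = some false ∨ a c = none))
    (hm : Consistent E m) :
    Consistent E (fun v => match a v with | some b => b | none => m v) := by
  intro p c hpc hc
  obtain ⟨h0, hn⟩ := hcoh p c hpc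
  simp only at hc ⊢
  cases hap : a p with
  | some b =>
    cases b with
    | false =>
      have := h0 hap
      simp [this] at hc
    | true => simp
  | none =>
    rcases hn hap with h | h
    · simp [h] at hc
    · simp [h] at hc
      exact hm p c hpc hc
end

section
/- On a tree taxonomy, if an action vector a contains no edge with the pattern (a_p, a_c) = (0, 1), then its compatibility set is nonempty; in particular, the labeling y defined by y_v = 1 if a_v = 1 or some descendant of v has action 1, and y_v = a_v's forced value otherwise (taking deferred nodes to 0 unless an ancestor-chain from a 1-descendant forces 1), yields a taxonomy-consistent completion agreeing with all non-deferred assertions. Hence avoidance of the single pattern (0,1) on all edges is equivalent to taxonomic satisfiability. -/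
open Classical in
/-- On a tree taxonomy (parent map `pa`), let `Desc v w` mean
`w` is a descendant-or-self of `v`, and define the labeling `y` by `y v = 1`
iff some descendant-or-self of `v` carries action 1. Then: (i) `y` is always
taxonomy-consistent; (ii) if no node asserted 0 has a descendant asserted 1,
then `y` lies in the compatibility set of `a`, so the compatibility set is
nonempty; and (iii) the compatibility set is nonempty iff no node with
`a_v = 0` has a descendant `w` with `a_w = 1` (the corrected, path-aware form
of avoiding the `(0,1)` pattern). -/
theorem satisfiability_via_descendants {V : Type*} (pa : V → Option V)
    (hwf : WellFounded fun p c => pa c = some p) (a : V → Act) :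
    let E : V → V → Prop := fun p c => pa c = some p
    let Desc : V → V → Prop := Relation.ReflTransGen fun x w => pa w = some x
    let y : V → Bool := fun v =>
      if ∃ w, Desc v w ∧ a w = some true then true else false
    Consistent E y ∧
    ((∀ v w, a v = some false → Desc v w → a w ≠ some true) → y ∈ Compat E a) ∧
    ((Compat E a).Nonempty ↔
      ∀ v w, a v = some false → Desc v w → a w ≠ some true) := by
  intro E Desc y
  have hcons : Consistent E y := by
    intro p c hpc hc
    simp only [y] at hc ⊢
    split at hc
    · rename_i h
      obtain ⟨w, hw, haw⟩ := h
      rw [if_pos ⟨w, Relation.ReflTransGen.head hpc hw, haw⟩]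
    · exact absurd hc (by simp)
  have hmem : (∀ v w, a v = some false → Desc v w → a w ≠ some true) →
      y ∈ Compat E a := by
    intro h
    refine ⟨hcons, ?_⟩
    intro v b hb
    cases b with
    | true => simp only [y]; rw [if_pos ⟨v, Relation.ReflTransGen.refl, hb⟩]
    | false =>
      simp only [y]
      rw [if_neg]
      rintro ⟨w, hw, haw⟩
      exact h v w hb hw haw
  refine ⟨hcons, hmem, ?_, fun h => ⟨y, hmem h⟩⟩
  rintro ⟨z, hzc, hza⟩ v w hv hvw hw
  have hup : ∀ u, Desc v u → z u = true → z v = true := by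
    intro u hu
    induction hu with
    | refl => exact id
    | tail hstep hpa ih => exact fun h => ih (hzc _ _ hpa h)
  have : z v = true := hup w hvw (hza w true hw)
  rw [hza v false hv] at this
  exact Bool.false_ne_true this
end
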